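/- Let α ≥ 0, s < 0, and A(α) = 2 - α + √(4-2α+α²). Then the function z(v,m) = v^{s/A(α)} m^{s/2} is convex on the domain {v > 0, m > 0} (its Hessian is positive semidefinite everywhere on this domain). -/

import Mathlib

noncomputable def Acoef (α : ℝ) : ℝ := 2 - α + Real.sqrt (4 - 2 * α + α ^ 2)

/-!
On the open quadrant, `v ^ a * m ^ b = exp (a log v + b log m)`. For `a, b ≤ 0` the exponent is
convex, being a nonnegative combination of the convex functions `-log v` and `-log m`, and `exp`
is convex and increasing. Here `a = s / A(α)` and `b = s / 2` are negative since `A(α) > 0`.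
-/

open Real Set

lemma Acoef_pos (α : ℝ) : 0 < Acoef α := by
  have hrad : 0 < 4 - 2 * α + α ^ 2 := by nlinarith [sq_nonneg (α - 1)]
  suffices α - 2 < √(4 - 2 * α + α ^ 2) by unfold Acoef; linarith
  rcases le_or_gt α 2 with hα | hα
  · linarith [sqrt_pos.2 hrad]
  · exact (lt_sqrt (by linarith)).2 (by nlinarith)

lemma ConvexOn.exp {E : Type*} [AddCommGroup E] [Module ℝ E] {s : Set E} {f : E → ℝ}
    (hf : ConvexOn ℝ s f) : ConvexOn ℝ s (fun x => exp (f x)) :=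
  ⟨hf.1, fun _ hx _ hy _ _ ha hb hab =>
    (exp_le_exp.2 (hf.2 hx hy ha hb hab)).trans (convexOn_exp.2 trivial trivial ha hb hab)⟩

lemma convexOn_mul_log_of_nonpos {a : ℝ} (ha : a ≤ 0) : ConvexOn ℝ (Ioi 0) (fun x => a * log x) :=
  (strictConcaveOn_log_Ioi.concaveOn.neg.smul (neg_nonneg.2 ha)).congr
    fun x _ => by simp only [Pi.neg_apply, smul_eq_mul]; ring

lemma convexOn_rpow_mul_rpow_of_nonpos {a b : ℝ} (ha : a ≤ 0) (hb : b ≤ 0) :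
    ConvexOn ℝ (Ioi (0 : ℝ) ×ˢ Ioi (0 : ℝ)) (fun p : ℝ × ℝ => p.1 ^ a * p.2 ^ b) := by
  have hquad : Convex ℝ (Ioi (0 : ℝ) ×ˢ Ioi (0 : ℝ)) := (convex_Ioi 0).prod (convex_Ioi 0)
  have hfst := ((convexOn_mul_log_of_nonpos ha).comp_linearMap (LinearMap.fst ℝ ℝ ℝ)).subset
    (fun p hp => hp.1) hquad
  have hsnd := ((convexOn_mul_log_of_nonpos hb).comp_linearMap (LinearMap.snd ℝ ℝ ℝ)).subset
    (fun p hp => hp.2) hquad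
  refine (hfst.add hsnd).exp.congr fun p ⟨hp₁, hp₂⟩ => ?_
  simp only [Pi.add_apply, Function.comp_apply, LinearMap.fst_apply, LinearMap.snd_apply]
  rw [exp_add, rpow_def_of_pos hp₁, rpow_def_of_pos hp₂, mul_comm a, mul_comm b]

theorem z_convex_general (α s : ℝ) (hs : s < 0) :
    ConvexOn ℝ {p : ℝ × ℝ | 0 < p.1 ∧ 0 < p.2}
      (fun p : ℝ × ℝ => p.1 ^ (s / Acoef α) * p.2 ^ (s / 2)) :=
  convexOn_rpow_mul_rpow_of_nonpos (div_neg_of_neg_of_pos hs (Acoef_pos α)).le (by linarith)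

/-- for α ≥ 0 and s < 0, z(v,m) = v^{s/A(α)} m^{s/2} is convex on
the open quadrant {v > 0, m > 0}. -/
theorem z_convex (α s : ℝ) (hα : 0 ≤ α) (hs : s < 0) :
    ConvexOn ℝ {p : ℝ × ℝ | 0 < p.1 ∧ 0 < p.2}
      (fun p : ℝ × ℝ => p.1 ^ (s / Acoef α) * p.2 ^ (s / 2)) :=
  z_convex_general α s hs
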